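/- Let l > 0, k > 0, c > 0 with c·k > 1, and k̃ = i·k/√(c²k² − 1) (so Im(k̃) > 0). Let f ∈ L²(ℝ) with support contained in Ω = [−l, l]. Let σ: ℝ → ℝ be nonnegative with σ = 0 on [−l, l], let η(x) = |∫₀ˣ σ(t) dt|, and let z = z₁ + i z₂ with z₁ ≥ 0, z₂ > 0. Define x̃ = x + (z/k) ∫₀ˣ σ(t) dt, and define for |x| > l the PML-continued solution u^e(x̃) = (1/(1 − c²k²)²) ∫_{−l}^{l} G_{x̃}(y) f(y) dy, where G_{x̃}(y) = − e^{i k̃ (x̃ − y)}/(2 i k̃) when x > l and G_{x̃}(y) = − e^{−i k̃ (x̃ − y)}/(2 i k̃) when x < −l. Let λ ∈ (0,1). If z₁/z₂ ≥ −(1/(1−λ)) · Re(k̃)/Im(k̃), then for all |x| > l, |u^e(x̃)| ≤ (√l / (√2 · |k̃| · (1 − c²k²)²)) · e^{−λ Im(k̃) (|x + (z₁/k) η(x)| − l)} · ‖f‖_{L²(Ω)}. -/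

import Mathlib

/-! Since `c k > 1`, the wavenumber `k̃ = i k / √(c²k² - 1)` is purely imaginary with
`Im k̃ > 0`, so `|e^{± i k̃ w}| = e^{∓ Im k̃ · Re w}`. As `σ ≥ 0`, the integral `∫₀ˣ σ` has the
sign of `x`, hence so does `Re x̃ = x + (z₁/k) ∫₀ˣ σ`, and on `[-l, l]` the continued Green's
function is bounded by `e^{-Im k̃ (|Re x̃| - l)} / (2|k̃|)`. Cauchy–Schwarz on `[-l, l]` contributes
`√(2l) ‖f‖`, and `|x + (z₁/k) η(x)| ≤ |Re x̃|` together with `λ ≤ 1` weakens the exponent to the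
stated one. -/

open MeasureTheory Complex

theorem intervalIntegral_norm_le_sqrt_mul_sqrt {E : Type*} [NormedAddCommGroup E] {f : ℝ → E}
    {a b : ℝ} (hab : a ≤ b) (hf : MemLp f 2 (volume.restrict (Set.Ioc a b))) :
    ∫ y in a..b, ‖f y‖ ≤ √(b - a) * √(∫ y in a..b, ‖f y‖ ^ 2) := by
  have H := integral_mul_le_Lp_mul_Lq_of_nonneg Real.HolderConjugate.two_two
    (Filter.Eventually.of_forall fun _ => zero_le_one)
    (Filter.Eventually.of_forall fun y => norm_nonneg (f y))
    (by simpa using memLp_const (μ := volume.restrict (Set.Ioc a b)) (1 : ℝ))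
    (by simpa using hf.norm)
  simp only [Real.rpow_two, one_pow, one_mul, mul_one, integral_const,
    measureReal_restrict_apply_univ, Real.volume_real_Ioc_of_le hab, smul_eq_mul] at H
  rw [intervalIntegral.integral_of_le hab, intervalIntegral.integral_of_le hab,
    Real.sqrt_eq_rpow, Real.sqrt_eq_rpow]
  simpa only [one_div] using H

theorem norm_intervalIntegral_mul_le {f g : ℝ → ℂ} {a b M : ℝ} (hab : a ≤ b)
    (hf : MemLp f 2 (volume.restrict (Set.Ioc a b))) (hM : 0 ≤ M)
    (hg : ∀ y ∈ Set.Icc a b, ‖g y‖ ≤ M) :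
    ‖∫ y in a..b, g y * f y‖ ≤ M * √(b - a) * √(∫ y in a..b, ‖f y‖ ^ 2) := by
  have : Fact (volume (Set.Ioc a b) < ⊤) := ⟨measure_Ioc_lt_top⟩
  have hfi : IntervalIntegrable (fun y => ‖f y‖) volume a b := by
    rw [intervalIntegrable_iff_integrableOn_Ioc_of_le hab]
    exact (hf.integrable one_le_two).norm
  calc ‖∫ y in a..b, g y * f y‖ ≤ ∫ y in a..b, M * ‖f y‖ :=
        intervalIntegral.norm_integral_le_of_norm_le hab
          (Filter.Eventually.of_forall fun y hy => by
            rw [norm_mul]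
            exact mul_le_mul_of_nonneg_right (hg y (Set.Ioc_subset_Icc_self hy)) (norm_nonneg _))
          (hfi.const_mul M)
    _ = M * ∫ y in a..b, ‖f y‖ := intervalIntegral.integral_const_mul M _
    _ ≤ M * (√(b - a) * √(∫ y in a..b, ‖f y‖ ^ 2)) :=
        mul_le_mul_of_nonneg_left (intervalIntegral_norm_le_sqrt_mul_sqrt hab hf) hM
    _ = _ := (mul_assoc _ _ _).symm

theorem norm_exp_I_mul_mul {κ : ℂ} (hκ : κ.re = 0) (W : ℂ) :
    ‖exp (I * κ * W)‖ = Real.exp (-(κ.im * W.re)) := by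
  simp [Complex.norm_exp, hκ]

theorem norm_exp_neg_I_mul_mul {κ : ℂ} (hκ : κ.re = 0) (W : ℂ) :
    ‖exp (-I * κ * W)‖ = Real.exp (κ.im * W.re) := by
  simp [Complex.norm_exp, hκ]

theorem norm_helmholtzGreen_le {κ : ℂ} (hκ : κ.re = 0) (hκ' : 0 ≤ κ.im) {l y : ℝ}
    (hy : y ∈ Set.Icc (-l) l) (X : ℂ) (p : Prop) [Decidable p] (hp : p → 0 ≤ X.re)
    (hnp : ¬p → X.re ≤ 0) :
    ‖if p then -exp (I * κ * (X - y)) / (2 * I * κ) else -exp (-I * κ * (X - y)) / (2 * I * κ)‖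
      ≤ Real.exp (-(κ.im * (|X.re| - l))) / (2 * ‖κ‖) := by
  obtain ⟨hyl, hyr⟩ := hy
  have h2Iκ : ‖2 * I * κ‖ = 2 * ‖κ‖ := by simp
  split_ifs with h
  · rw [norm_div, norm_neg, norm_exp_I_mul_mul hκ, h2Iκ]
    gcongr
    simp only [sub_re, ofReal_re, abs_of_nonneg (hp h)]
    nlinarith
  · rw [norm_div, norm_neg, norm_exp_neg_I_mul_mul hκ, h2Iκ]
    gcongr
    simp only [sub_re, ofReal_re, abs_of_nonpos (hnp h)]
    nlinarith

theorem intervalIntegral_nonpos_of_nonneg_of_ge {σ : ℝ → ℝ} (hσ : ∀ t, 0 ≤ σ t) {a b : ℝ}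
    (hba : b ≤ a) : ∫ t in a..b, σ t ≤ 0 := by
  rw [intervalIntegral.integral_symm, neg_nonpos]
  exact intervalIntegral.integral_nonneg hba fun t _ => hσ t

noncomputable def pmlStretch (k z₁ z₂ : ℝ) (σ : ℝ → ℝ) (x : ℝ) : ℂ :=
  x + ((z₁ + z₂ * I) / k) * ((∫ t in (0 : ℝ)..x, σ t : ℝ) : ℂ)

section pmlStretch

variable {k z₁ : ℝ} (z₂ : ℝ) {σ : ℝ → ℝ}

theorem pmlStretch_re (x : ℝ) :
    (pmlStretch k z₁ z₂ σ x).re = x + z₁ / k * ∫ t in (0 : ℝ)..x, σ t := by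
  have : ((z₁ : ℂ) + z₂ * I) / k = ((z₁ / k : ℝ) : ℂ) + ((z₂ / k : ℝ) : ℂ) * I := by
    push_cast; ring
  simp [pmlStretch, this]

theorem pmlStretch_re_nonneg (hσ : ∀ t, 0 ≤ σ t) (hz₁ : 0 ≤ z₁) (hk : 0 ≤ k) {x : ℝ}
    (hx : 0 ≤ x) : 0 ≤ (pmlStretch k z₁ z₂ σ x).re := by
  rw [pmlStretch_re]
  have : 0 ≤ ∫ t in (0 : ℝ)..x, σ t := intervalIntegral.integral_nonneg hx fun t _ => hσ t
  positivity

theorem pmlStretch_re_nonpos (hσ : ∀ t, 0 ≤ σ t) (hz₁ : 0 ≤ z₁) (hk : 0 ≤ k) {x : ℝ}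
    (hx : x ≤ 0) : (pmlStretch k z₁ z₂ σ x).re ≤ 0 := by
  rw [pmlStretch_re]
  have := mul_nonpos_of_nonneg_of_nonpos (div_nonneg hz₁ hk)
    (intervalIntegral_nonpos_of_nonneg_of_ge hσ hx)
  linarith

theorem abs_pmlStretch_re (hσ : ∀ t, 0 ≤ σ t) (hz₁ : 0 ≤ z₁) (hk : 0 ≤ k) (x : ℝ) :
    |(pmlStretch k z₁ z₂ σ x).re| = |x| + z₁ / k * |∫ t in (0 : ℝ)..x, σ t| := by
  have ha : 0 ≤ z₁ / k := div_nonneg hz₁ hk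
  rw [pmlStretch_re, ← abs_of_nonneg ha, ← abs_mul, abs_of_nonneg ha]
  refine (abs_add_eq_add_abs_iff _ _).2 ?_
  rcases le_total 0 x with hx | hx
  · have : 0 ≤ ∫ t in (0 : ℝ)..x, σ t := intervalIntegral.integral_nonneg hx fun t _ => hσ t
    exact Or.inl ⟨hx, by positivity⟩
  · exact Or.inr ⟨hx, mul_nonpos_of_nonneg_of_nonpos ha
      (intervalIntegral_nonpos_of_nonneg_of_ge hσ hx)⟩

theorem abs_add_mul_abs_integral_le_abs_pmlStretch_re (hσ : ∀ t, 0 ≤ σ t) (hz₁ : 0 ≤ z₁)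
    (hk : 0 ≤ k) (x : ℝ) :
    abs (x + z₁ / k * |∫ t in (0 : ℝ)..x, σ t|) ≤ |(pmlStretch k z₁ z₂ σ x).re| := by
  rw [abs_pmlStretch_re z₂ hσ hz₁ hk]
  refine (abs_add_le _ _).trans_eq ?_
  rw [abs_of_nonneg (mul_nonneg (div_nonneg hz₁ hk) (abs_nonneg _))]

theorem abs_le_abs_pmlStretch_re (hσ : ∀ t, 0 ≤ σ t) (hz₁ : 0 ≤ z₁) (hk : 0 ≤ k) (x : ℝ) :
    |x| ≤ |(pmlStretch k z₁ z₂ σ x).re| := by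
  rw [abs_pmlStretch_re z₂ hσ hz₁ hk]
  exact le_add_of_nonneg_right (mul_nonneg (div_nonneg hz₁ hk) (abs_nonneg _))

end pmlStretch

theorem exp_neg_mul_sub_le_exp_neg_mul_mul_sub {β lam A B l : ℝ} (hβ : 0 ≤ β) (hlam₀ : 0 ≤ lam)
    (hlam₁ : lam ≤ 1) (hBA : B ≤ A) (hlA : l ≤ A) :
    Real.exp (-(β * (A - l))) ≤ Real.exp (-lam * β * (B - l)) := by
  rw [Real.exp_le_exp]
  nlinarith [mul_le_mul_of_nonneg_left hBA (mul_nonneg hlam₀ hβ),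
    mul_nonneg (mul_nonneg (sub_nonneg.2 hlam₁) hβ) (sub_nonneg.2 hlA)]

theorem pml_decay_exponential_kernel_complex_wavenumber_general (l k c : ℝ) (hl : 0 < l) (hk : 0 < k)
    (hck : 1 < c * k)
    (ktilde : ℂ)
    (hkt : ktilde = Complex.I * (k : ℂ) / ((Real.sqrt (c ^ 2 * k ^ 2 - 1) : ℝ) : ℂ))
    (f : ℝ → ℂ) (hf : MemLp f 2 volume)
    (σ : ℝ → ℝ) (hσnn : ∀ t : ℝ, 0 ≤ σ t)
    (z₁ z₂ : ℝ) (hz₁ : 0 ≤ z₁)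
    (lam : ℝ) (hlam : lam ∈ Set.Ioo (0:ℝ) 1) :
    ∀ x : ℝ, l < |x| →
      ‖(((1 / (1 - c ^ 2 * k ^ 2) ^ 2 : ℝ) : ℂ) * ∫ y in (-l)..l,
          (if l < x then
            -Complex.exp (Complex.I * ktilde *
              (((x : ℂ) + (((z₁ : ℂ) + (z₂ : ℂ) * Complex.I) / (k : ℂ)) *
                ((∫ t in (0:ℝ)..x, σ t : ℝ) : ℂ)) - (y : ℂ))) / (2 * Complex.I * ktilde)
          else
            -Complex.exp (-Complex.I * ktilde *
              (((x : ℂ) + (((z₁ : ℂ) + (z₂ : ℂ) * Complex.I) / (k : ℂ)) *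
                ((∫ t in (0:ℝ)..x, σ t : ℝ) : ℂ)) - (y : ℂ))) / (2 * Complex.I * ktilde))
          * f y)‖
        ≤ (Real.sqrt l / (Real.sqrt 2 * ‖ktilde‖ * (1 - c ^ 2 * k ^ 2) ^ 2)) *
            Real.exp (-lam * ktilde.im *
              (abs (x + z₁ / k * |∫ t in (0:ℝ)..x, σ t|) - l)) *
            Real.sqrt (∫ y in (-l)..l, ‖f y‖ ^ 2) := by
  intro x hx
  have hs : 0 < √(c ^ 2 * k ^ 2 - 1) := Real.sqrt_pos.2 (by nlinarith)
  have hκ : ktilde = ((k / √(c ^ 2 * k ^ 2 - 1) : ℝ) : ℂ) * I := by rw [hkt]; push_cast; ring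
  have hre : ktilde.re = 0 := by simp [hκ]
  have him : 0 < ktilde.im := by simpa [hκ] using div_pos hk hs
  have hnorm : 0 < ‖ktilde‖ := norm_pos_iff.2 fun h => by simp [h] at him
  have hD : 0 < (1 - c ^ 2 * k ^ 2) ^ 2 := by
    have : 1 < c ^ 2 * k ^ 2 := by nlinarith
    nlinarith
  have hdecay := exp_neg_mul_sub_le_exp_neg_mul_mul_sub him.le hlam.1.le hlam.2.le
    (abs_add_mul_abs_integral_le_abs_pmlStretch_re z₂ hσnn hz₁ hk.le x)
    (hx.le.trans (abs_le_abs_pmlStretch_re z₂ hσnn hz₁ hk.le x))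
  rw [norm_mul, Complex.norm_real, Real.norm_of_nonneg (by positivity)]
  calc _ ≤ 1 / (1 - c ^ 2 * k ^ 2) ^ 2 *
        (Real.exp (-(ktilde.im * (|(pmlStretch k z₁ z₂ σ x).re| - l))) / (2 * ‖ktilde‖) *
          √(l - -l) * √(∫ y in (-l)..l, ‖f y‖ ^ 2)) := by
        gcongr
        exact norm_intervalIntegral_mul_le (by linarith) (hf.restrict _) (by positivity)
          fun y hy => norm_helmholtzGreen_le hre him.le hy _ _
            (fun hxr => pmlStretch_re_nonneg z₂ hσnn hz₁ hk.le (by linarith))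
            (fun hxl => pmlStretch_re_nonpos z₂ hσnn hz₁ hk.le
              (by cases abs_cases x <;> linarith))
    _ = √l / (√2 * ‖ktilde‖ * (1 - c ^ 2 * k ^ 2) ^ 2) *
          Real.exp (-(ktilde.im * (|(pmlStretch k z₁ z₂ σ x).re| - l))) *
          √(∫ y in (-l)..l, ‖f y‖ ^ 2) := by
        rw [show l - -l = 2 * l by ring, Real.sqrt_mul zero_le_two]
        field_simp
        rw [Real.sq_sqrt zero_le_two]
    _ ≤ _ := by gcongr

/-- Theorem 3.1, case 2 for the exponential kernel with `c·k > 1` and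
`k̃ = i k/√(c²k² − 1)` (so `Im k̃ > 0`): if `z₁/z₂ ≥ −(1/(1−λ)) Re(k̃)/Im(k̃)` then for
`|x| > l`, `|u^e(x̃)| ≤ (√l/(√2 |k̃| (1−c²k²)²)) e^{−λ Im(k̃)(|x+(z₁/k)η(x)|−l)} ‖f‖_{L²(Ω)}`. -/
theorem pml_decay_exponential_kernel_complex_wavenumber (l k c : ℝ) (hl : 0 < l) (hk : 0 < k)
    (hc : 0 < c) (hck : 1 < c * k)
    (ktilde : ℂ)
    (hkt : ktilde = Complex.I * (k : ℂ) / ((Real.sqrt (c ^ 2 * k ^ 2 - 1) : ℝ) : ℂ))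
    (f : ℝ → ℂ) (hf : MemLp f 2 volume)
    (hsupp : ∀ x : ℝ, x ∉ Set.Icc (-l) l → f x = 0)
    (σ : ℝ → ℝ) (hσint : LocallyIntegrable σ) (hσnn : ∀ t : ℝ, 0 ≤ σ t)
    (hσ0 : ∀ t ∈ Set.Icc (-l) l, σ t = 0)
    (z₁ z₂ : ℝ) (hz₁ : 0 ≤ z₁) (hz₂ : 0 < z₂)
    (lam : ℝ) (hlam : lam ∈ Set.Ioo (0:ℝ) 1)
    (hratio : z₁ / z₂ ≥ -(1 / (1 - lam)) * (ktilde.re / ktilde.im)) :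
    ∀ x : ℝ, l < |x| →
      ‖(((1 / (1 - c ^ 2 * k ^ 2) ^ 2 : ℝ) : ℂ) * ∫ y in (-l)..l,
          (if l < x then
            -Complex.exp (Complex.I * ktilde *
              (((x : ℂ) + (((z₁ : ℂ) + (z₂ : ℂ) * Complex.I) / (k : ℂ)) *
                ((∫ t in (0:ℝ)..x, σ t : ℝ) : ℂ)) - (y : ℂ))) / (2 * Complex.I * ktilde)
          else
            -Complex.exp (-Complex.I * ktilde *
              (((x : ℂ) + (((z₁ : ℂ) + (z₂ : ℂ) * Complex.I) / (k : ℂ)) *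
                ((∫ t in (0:ℝ)..x, σ t : ℝ) : ℂ)) - (y : ℂ))) / (2 * Complex.I * ktilde))
          * f y)‖
        ≤ (Real.sqrt l / (Real.sqrt 2 * ‖ktilde‖ * (1 - c ^ 2 * k ^ 2) ^ 2)) *
            Real.exp (-lam * ktilde.im *
              (abs (x + z₁ / k * |∫ t in (0:ℝ)..x, σ t|) - l)) *
            Real.sqrt (∫ y in (-l)..l, ‖f y‖ ^ 2) :=
  pml_decay_exponential_kernel_complex_wavenumber_general l k c hl hk hck ktilde hkt f hf σ hσnn z₁
    z₂ hz₁ lam hlam
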